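/- arXiv:math/0401205 — 2 statements merged into one kernel-verified Lean document; each statement's English description precedes it below -/
import Mathlib

section
/- Suppose A and B are bounded linear operators on ℓ²(ℕ) with ⟨e_j, A e_k⟩ = δ_{jk} + [u_{−1/2,1}]_{j+k+1} and ⟨e_j, B e_k⟩ = δ_{jk} − [u_{1/2,1}]_{j+k+1} for all j,k ≥ 0, i.e. A = I + H(u_{−1/2,1}) and B = I − H(u_{1/2,1}). Then A and B are invertible (bijective with bounded inverse) on ℓ²(ℕ). -/
open Filter MeasureTheory
open scoped InnerProductSpace

noncomputable section

/-- ℓ²(ℕ) over ℂ. -/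
abbrev l2 : Type := lp (fun _ : ℕ => ℂ) 2

/-- The `k`-th Fourier coefficient of a function on the unit circle, given as a
`2π`-periodic function of the angle: `a_k = (1/(2π)) ∫_0^{2π} f(θ) e^{-ikθ} dθ`. -/
def fc (f : ℝ → ℂ) (k : ℤ) : ℂ :=
  ((1 / (2 * Real.pi) : ℝ) : ℂ) *
    ∫ θ in (0:ℝ)..(2 * Real.pi), f θ * Complex.exp (-(Complex.I * k * θ))

/-- The standard orthonormal basis vector `e_j` of ℓ²(ℕ). -/
def ee (j : ℕ) : l2 := lp.single 2 j 1

/-- Matrix entry `⟨e_j, A e_k⟩` of an operator on ℓ²(ℕ). -/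
def ent (A : l2 →L[ℂ] l2) (j k : ℕ) : ℂ := ⟪ee j, A (ee k)⟫_ℂ

/-- The function `u_{β,1}` on the circle: `u_{β,1}(e^{iθ}) = exp(iβ(θ−π))` for
`0 < θ < 2π`; written as `exp(β · Log(−e^{iθ}))`. -/
def u1 (β : ℂ) (θ : ℝ) : ℂ := Complex.exp (β * Complex.log (-Complex.exp (Complex.I * θ)))


/-! For `β ∉ ℤ` the Fourier coefficients of `u_{β,1}` are `sin (πβ) / (π (β - n))`, so `A` and `B`
are both of the form `I + K` with `K_{jk} = 1 / (π (j + k + r))`, where `r = 3/2` resp. `r = 1/2`.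
This generalized Hilbert matrix is positive semidefinite, being the Gram matrix of the monomials
`t ^ j` in `L²((0, 1), t ^ (r - 1) dt)`. Hence `‖x‖² ≤ Re ⟪x, (I + K) x⟫`, and an operator on a
Hilbert space that is coercive in this sense is invertible. -/
open Complex ComplexConjugate

lemma u1_eq_exp {β : ℂ} {θ : ℝ} (h0 : 0 < θ) (h2π : θ ≤ 2 * Real.pi) :
    u1 β θ = exp (β * (I * (θ - Real.pi))) := by
  have hneg : -exp (I * θ) = exp (I * (θ - Real.pi)) := by
    rw [mul_sub, exp_sub, mul_comm I (Real.pi : ℂ), exp_pi_mul_I, div_neg, div_one]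
  rw [u1, hneg, log_exp] <;> simp only [mul_im, I_re, I_im, sub_re, sub_im, ofReal_re,
    ofReal_im] <;> linarith [Real.pi_pos]

lemma fc_u1 {β : ℂ} {n : ℤ} (hβ : β ≠ n) :
    fc (u1 β) n = sin (Real.pi * β) / (Real.pi * (β - n)) := by
  have hπ : (Real.pi : ℂ) ≠ 0 := ofReal_ne_zero.mpr Real.pi_ne_zero
  have hc : I * (β - n) ≠ 0 := mul_ne_zero I_ne_zero (sub_ne_zero.mpr hβ)
  have hintegrand : Set.EqOn (fun θ : ℝ => u1 β θ * exp (-(I * n * θ)))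
      (fun θ : ℝ => exp (-(β * Real.pi * I)) * exp (I * (β - n) * θ))
      (Set.Ioo 0 (2 * Real.pi)) := fun θ hθ => by
    simp only
    rw [u1_eq_exp hθ.1 hθ.2.le, ← exp_add, ← exp_add]
    ring_nf
  have hend : exp (I * (β - n) * (2 * Real.pi : ℝ)) = exp (2 * Real.pi * I * β) := by
    rw [exp_eq_exp_iff_exists_int]
    exact ⟨-n, by push_cast; ring⟩
  have hsin : exp (-(β * Real.pi * I)) * (exp (2 * Real.pi * I * β) - 1)
      = 2 * I * sin (Real.pi * β) := by
    rw [sin, mul_sub, ← exp_add, mul_one]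
    ring_nf
    rw [I_sq]
    ring_nf
  rw [fc, intervalIntegral.integral_congr_Ioo_of_le (by positivity) hintegrand,
    intervalIntegral.integral_const_mul, integral_exp_mul_complex hc, hend, ofReal_zero,
    mul_zero, exp_zero, mul_div_assoc', hsin]
  push_cast
  field_simp

lemma intCast_ne_add_half (n m : ℤ) : (n : ℂ) ≠ m + 1 / 2 := by
  intro h
  have h2 : ((2 * n : ℤ) : ℂ) = ((2 * m + 1 : ℤ) : ℂ) := by push_cast; rw [h]; ring
  have := Int.cast_injective h2
  omega

lemma fc_u1_neg_half (n : ℤ) : fc (u1 (-(1/2))) n = 1 / (Real.pi * (n + 1/2)) := by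
  rw [fc_u1 fun h => intCast_ne_add_half n (-1) (by rw [← h]; push_cast; ring),
    show (Real.pi : ℂ) * -(1/2) = -(Real.pi / 2) by ring, sin_neg, sin_pi_div_two, neg_div,
    ← div_neg]
  ring_nf

lemma fc_u1_half (n : ℤ) : fc (u1 (1/2)) n = 1 / (Real.pi * (1/2 - n)) := by
  rw [fc_u1 fun h => intCast_ne_add_half n 0 (by rw [← h]; push_cast; ring),
    show (Real.pi : ℂ) * (1/2) = Real.pi / 2 by ring, sin_pi_div_two]

def IsAccretiveKernel (K : ℕ → ℕ → ℂ) : Prop :=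
  ∀ (s : Finset ℕ) (c : ℕ → ℂ), 0 ≤ (∑ j ∈ s, ∑ k ∈ s, conj (c j) * c k * K j k).re

lemma IsAccretiveKernel.const_mul {K : ℕ → ℕ → ℂ} (hK : IsAccretiveKernel K) {a : ℝ}
    (ha : 0 ≤ a) : IsAccretiveKernel fun j k => a * K j k := fun s c => by
  have hform : ∑ j ∈ s, ∑ k ∈ s, conj (c j) * c k * (a * K j k)
      = a * ∑ j ∈ s, ∑ k ∈ s, conj (c j) * c k * K j k := by
    simp only [Finset.mul_sum]
    exact Finset.sum_congr rfl fun j _ => Finset.sum_congr rfl fun k _ => by ring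
  rw [hform, re_ofReal_mul]
  exact mul_nonneg ha (hK s c)

lemma integral_rpow_mul_pow {r : ℝ} (hr : 0 < r) (n : ℕ) :
    ∫ t in (0:ℝ)..1, t ^ (r - 1) * t ^ n = 1 / (n + r) := by
  have hcongr : Set.EqOn (fun t : ℝ => t ^ (r - 1) * t ^ n) (fun t => t ^ (n + r - 1))
      (Set.Ioo 0 1) := fun t ht => by
    simp only
    rw [← Real.rpow_natCast, ← Real.rpow_add ht.1]
    ring_nf
  rw [intervalIntegral.integral_congr_Ioo_of_le zero_le_one hcongr,
    integral_rpow (Or.inl (by linarith [n.cast_nonneg (α := ℝ)]))]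
  have hpos : (0:ℝ) < n + r := by positivity
  simp [Real.zero_rpow hpos.ne']

lemma hilbertForm_eq_integral {r : ℝ} (hr : 0 < r) (s : Finset ℕ) (c : ℕ → ℂ) :
    ∑ j ∈ s, ∑ k ∈ s, conj (c j) * c k * (1 / ((j : ℂ) + k + r))
      = ∫ t in (0:ℝ)..1, ((t ^ (r - 1) * normSq (∑ k ∈ s, c k * t ^ k) : ℝ) : ℂ) := by
  have hpt : ∀ t : ℝ, ((t ^ (r - 1) * normSq (∑ k ∈ s, c k * t ^ k) : ℝ) : ℂ)
      = ∑ j ∈ s, ∑ k ∈ s, (t ^ (r - 1) * t ^ (j + k)) • (conj (c j) * c k) := by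
    intro t
    rw [ofReal_mul, normSq_eq_conj_mul_self, map_sum, Finset.sum_mul_sum]
    simp only [Finset.mul_sum]
    refine Finset.sum_congr rfl fun j _ => Finset.sum_congr rfl fun k _ => ?_
    rw [real_smul, map_mul, map_pow, conj_ofReal]
    push_cast
    ring
  have hint : ∀ j k : ℕ, IntervalIntegrable (fun t : ℝ => t ^ (r - 1) * t ^ (j + k)) volume 0 1 :=
    fun j k => (intervalIntegral.intervalIntegrable_rpow' (by linarith)).mul_continuousOn
      (continuous_pow _).continuousOn
  simp_rw [hpt]
  rw [intervalIntegral.integral_finsetSum fun j _ => by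
    simpa only [Finset.sum_fn] using
      IntervalIntegrable.sum s fun k _ => (hint j k).smul_continuousOn continuousOn_const]
  refine Finset.sum_congr rfl fun j _ => ?_
  rw [intervalIntegral.integral_finsetSum fun k _ => (hint j k).smul_continuousOn continuousOn_const]
  refine Finset.sum_congr rfl fun k _ => ?_
  rw [intervalIntegral.integral_smul_const, integral_rpow_mul_pow hr, real_smul]
  push_cast
  ring

lemma isAccretiveKernel_hilbert {r : ℝ} (hr : 0 < r) :
    IsAccretiveKernel fun j k => 1 / ((j : ℂ) + k + r) := fun s c => by
  rw [hilbertForm_eq_integral hr s c, intervalIntegral.integral_ofReal, ofReal_re]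
  exact intervalIntegral.integral_nonneg zero_le_one fun t ht =>
    mul_nonneg (Real.rpow_nonneg ht.1 _) (normSq_nonneg _)

lemma inner_sum_smul_map_sum_smul {𝕜 E ι : Type*} [RCLike 𝕜] [NormedAddCommGroup E]
    [InnerProductSpace 𝕜 E] (T : E →L[𝕜] E) (s : Finset ι) (c : ι → 𝕜) (b : ι → E) :
    ⟪∑ j ∈ s, c j • b j, T (∑ k ∈ s, c k • b k)⟫_𝕜
      = ∑ j ∈ s, ∑ k ∈ s, conj (c j) * c k * ⟪b j, T (b k)⟫_𝕜 := by
  simp only [map_sum, map_smul, sum_inner, inner_sum, inner_smul_left, inner_smul_right,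
    Finset.mul_sum]
  rw [Finset.sum_comm]
  exact Finset.sum_congr rfl fun j _ => Finset.sum_congr rfl fun k _ => by ring

lemma ent_one_sub (M : l2 →L[ℂ] l2) (j k : ℕ) :
    ent (M - 1) j k = ent M j k - if j = k then 1 else 0 := by
  rw [ent, ent, sub_apply, inner_sub_right, one_apply_eq_self]
  simp [ee, lp.inner_single_left, Pi.single_apply]

lemma re_inner_map_self_nonneg_of_isAccretiveKernel (T : l2 →L[ℂ] l2)
    (hT : IsAccretiveKernel (ent T)) (x : l2) : 0 ≤ re ⟪x, T x⟫_ℂ := by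
  have hpartial : ∀ s : Finset ℕ,
      0 ≤ re ⟪∑ j ∈ s, lp.single 2 j (x j), T (∑ j ∈ s, lp.single 2 j (x j))⟫_ℂ := fun s => by
    have hsingle : ∀ j, lp.single 2 j (x j) = x j • ee j := fun j => by
      rw [ee, ← lp.single_smul, smul_eq_mul, mul_one]
    simp only [hsingle]
    rw [inner_sum_smul_map_sum_smul]
    exact hT s x
  have hcont : Continuous fun y : l2 => re ⟪y, T y⟫_ℂ := by fun_prop
  exact ge_of_tendsto ((hcont.tendsto x).comp (lp.hasSum_single ENNReal.ofNat_ne_top x))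
    (Eventually.of_forall hpartial)

lemma isUnit_of_ent_eq_one_add (M : l2 →L[ℂ] l2) {K : ℕ → ℕ → ℂ} (hK : IsAccretiveKernel K)
    (hM : ∀ j k, ent M j k = (if j = k then 1 else 0) + K j k) : IsUnit M := by
  have hent : ent (M - 1) = K := by
    ext j k
    rw [ent_one_sub, hM, add_sub_cancel_left]
  refine ContinuousLinearMap.isUnit_of_forall_le_norm_inner_map M one_pos fun x => ?_
  have hacc := re_inner_map_self_nonneg_of_isAccretiveKernel (M - 1) (hent ▸ hK) x
  have hnorm : (⟪x, x⟫_ℂ).re = ‖x‖ ^ 2 := inner_self_eq_norm_sq (𝕜 := ℂ) x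
  rw [sub_apply, one_apply_eq_self, inner_sub_right, sub_re, hnorm] at hacc
  calc ‖x‖ ^ 2 * (1 : NNReal) ≤ re ⟪x, M x⟫_ℂ := by push_cast; linarith
    _ ≤ ‖⟪x, M x⟫_ℂ‖ := re_le_norm _
    _ = ‖⟪M x, x⟫_ℂ‖ := norm_inner_symm _ _

/-- If `A = I + H(u_{−1/2,1})` and `B = I − H(u_{1/2,1})` on ℓ²(ℕ), then `A` and `B`
are invertible (bijective with bounded inverse). -/
theorem stmt1 (A B : l2 →L[ℂ] l2)
    (hA : ∀ j k : ℕ, ent A j k =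
      (if j = k then 1 else 0) + fc (u1 (-(1/2))) ((j : ℤ) + k + 1))
    (hB : ∀ j k : ℕ, ent B j k =
      (if j = k then 1 else 0) - fc (u1 (1/2)) ((j : ℤ) + k + 1)) :
    (∃ A' : l2 →L[ℂ] l2, A ∘L A' = 1 ∧ A' ∘L A = 1) ∧
    (∃ B' : l2 →L[ℂ] l2, B ∘L B' = 1 ∧ B' ∘L B = 1) := by
  have hπ : 0 ≤ (Real.pi)⁻¹ := inv_nonneg.mpr Real.pi_pos.le
  refine ⟨isUnit_iff_exists.mp (isUnit_of_ent_eq_one_add A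
      ((isAccretiveKernel_hilbert (r := 3/2) (by norm_num)).const_mul hπ) fun j k => ?_),
    isUnit_iff_exists.mp (isUnit_of_ent_eq_one_add B
      ((isAccretiveKernel_hilbert (r := 1/2) (by norm_num)).const_mul hπ) fun j k => ?_)⟩
  · rw [hA, fc_u1_neg_half]
    push_cast
    rw [one_div, mul_inv]
    ring
  · rw [hB, fc_u1_half]
    push_cast
    rw [show (1/2 : ℂ) - (j + k + 1) = -(j + k + 1/2) by ring, mul_neg, div_neg, one_div, mul_inv]
    ring

end
end

section
/- Let a : T → ℂ be even with absolutely summable Fourier coefficients and nonvanishing on T, and suppose a^{−1} (the pointwise inverse) also has absolutely summable Fourier coefficients. Let A and B be the bounded linear operators on ℓ²(ℕ) with ⟨e_j, A e_k⟩ = a_{j−k} + a_{j+k+1} and ⟨e_j, B e_k⟩ = [a^{−1}]_{j−k} + [a^{−1}]_{j+k+1} for all j,k ≥ 0 (i.e. A = T(a)+H(a) and B = T(a^{−1})+H(a^{−1})). Then A ∘ B = B ∘ A = I. -/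
/-!
Writing `a = ∑ c_k e^{ikθ}`, the Fourier coefficients of `a` are `c`, and since `a · a⁻¹ = 1`
the sequences `c` and `s = fc a⁻¹` are inverse to each other under convolution on `ℓ¹(ℤ)`;
`s` is even because `a(2π - θ) = a(θ)`. For `u, v ∈ ℓ¹(ℤ)` with `v` even,
`(T(u) + H(u)) (T(v) + H(v)) = T(u ∗ v) + H(u ∗ v)`: splitting the `ℤ`-sums that define
`(u ∗ v)_{j-k}` and `(u ∗ v)_{j+k+1}` into the halves `m ≥ 0` and `m < 0`, and folding the
negative halves with `v(-n) = v(n)`, gives exactly the matrix product. Applied to `(c, s)` and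
`(s, c)` this yields `T(δ) + H(δ) = I`.
-/

open Filter MeasureTheory
open scoped InnerProductSpace

noncomputable section

def convolve (u v : ℤ → ℂ) (n : ℤ) : ℂ := ∑' m, u m * v (n - m)

section Convolution

variable {u v : ℤ → ℂ}

lemma summable_mul_comp_sub (hu : Summable fun n => ‖u n‖) (hv : Summable fun n => ‖v n‖)
    (n : ℤ) : Summable fun m => u m * v (n - m) :=
  .of_norm_bounded (hu.mul_right (∑' k, ‖v k‖)) fun m => by
    rw [norm_mul]
    gcongr
    exact hv.le_tsum (n - m) fun _ _ => norm_nonneg _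

lemma hasSum_convolve_sub_add (hu : Summable fun n => ‖u n‖)
    (hv : Summable fun n => ‖v n‖) (j p : ℤ) :
    HasSum (fun m => u (j - m) * v (m + p)) (convolve u v (j + p)) := by
  refine ((Equiv.subLeft j).hasSum_iff.mpr
    (summable_mul_comp_sub hu hv (j + p)).hasSum).congr_fun fun m => ?_
  simp only [Function.comp_apply, Equiv.subLeft_apply]
  ring_nf

lemma convolve_comm (u v : ℤ → ℂ) : convolve u v = convolve v u := by
  ext n
  rw [convolve, convolve, ← (Equiv.subLeft n).tsum_eq]
  simp only [Equiv.subLeft_apply, sub_sub_cancel, mul_comm]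

lemma convolve_delta_right (u : ℤ → ℂ) : convolve u (fun n => if n = 0 then 1 else 0) = u := by
  ext n
  simp [convolve, sub_eq_zero, eq_comm (a := n)]

end Convolution

def trigSeries (c : ℤ → ℂ) (θ : ℝ) : ℂ := ∑' k : ℤ, c k * Complex.exp (Complex.I * k * θ)

lemma norm_exp_I_mul_intCast_mul (k : ℤ) (θ : ℝ) : ‖Complex.exp (Complex.I * k * θ)‖ = 1 := by
  simp [Complex.norm_exp]

lemma exp_I_mul_intCast_mul_two_pi_sub (k : ℤ) (θ : ℝ) :
    Complex.exp (Complex.I * k * ((2 * Real.pi - θ : ℝ) : ℂ)) =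
      Complex.exp (-(Complex.I * k * θ)) := by
  rw [show Complex.I * k * ((2 * Real.pi - θ : ℝ) : ℂ) =
      k * (2 * Real.pi * Complex.I) + -(Complex.I * k * θ) by push_cast; ring,
    Complex.exp_add, Complex.exp_int_mul_two_pi_mul_I, one_mul]

section TrigSeries

variable {c : ℤ → ℂ}

lemma continuous_trigSeries (hc : Summable fun k => ‖c k‖) : Continuous (trigSeries c) :=
  continuous_tsum (fun k => by fun_prop) hc fun k θ => by
    rw [norm_mul, norm_exp_I_mul_intCast_mul, mul_one]

lemma trigSeries_two_pi_sub (heven : ∀ k, c k = c (-k)) (θ : ℝ) :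
    trigSeries c (2 * Real.pi - θ) = trigSeries c θ := by
  simp only [trigSeries, exp_I_mul_intCast_mul_two_pi_sub]
  rw [← (Equiv.neg ℤ).tsum_eq]
  simp only [Equiv.neg_apply, ← heven, Int.cast_neg, mul_neg, neg_mul, neg_neg]

end TrigSeries

lemma integral_exp_I_mul_intCast_mul (m : ℤ) :
    ∫ θ in (0:ℝ)..(2 * Real.pi), Complex.exp (Complex.I * m * θ) =
      if m = 0 then ((2 * Real.pi : ℝ) : ℂ) else 0 := by
  split_ifs with hm
  · simp [hm]
  · have hIm : Complex.I * m ≠ 0 := by simp [hm]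
    rw [integral_exp_mul_complex hIm, show Complex.I * m * ((2 * Real.pi : ℝ) : ℂ) =
      m * (2 * Real.pi * Complex.I) by push_cast; ring, Complex.exp_int_mul_two_pi_mul_I]
    simp

lemma fc_const_one : fc (fun _ => 1) = fun n => if n = 0 then 1 else 0 := by
  ext n
  have h : ∀ θ : ℝ,
      1 * Complex.exp (-(Complex.I * n * θ)) = Complex.exp (Complex.I * (-n : ℤ) * θ) :=
    fun θ => by push_cast; ring_nf
  simp only [fc, h, integral_exp_I_mul_intCast_mul, neg_eq_zero]
  split_ifs
  · rw [← Complex.ofReal_mul, one_div_mul_cancel (by positivity), Complex.ofReal_one]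
  · rw [mul_zero]

lemma fc_const_mul (z : ℂ) (f : ℝ → ℂ) (n : ℤ) : fc (fun θ => z * f θ) n = z * fc f n := by
  simp only [fc, mul_assoc, intervalIntegral.integral_const_mul]
  ring

lemma fc_exp_mul (m : ℤ) (f : ℝ → ℂ) (n : ℤ) :
    fc (fun θ => Complex.exp (Complex.I * m * θ) * f θ) n = fc f (n - m) := by
  simp only [fc]
  congr 2 with θ
  rw [mul_comm (Complex.exp _), mul_assoc, ← Complex.exp_add]
  push_cast
  ring_nf

lemma fc_tsum {ι : Type*} [Countable ι] {f : ι → ℝ → ℂ} (hf : ∀ i, Continuous (f i))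
    {C : ι → ℝ} (hC : Summable C) (hfC : ∀ i, ∀ θ ∈ Set.Icc 0 (2 * Real.pi), ‖f i θ‖ ≤ C i)
    (n : ℤ) : fc (fun θ => ∑' i, f i θ) n = ∑' i, fc (f i) n := by
  have hbound : ∀ i, ∀ θ ∈ Set.uIoc 0 (2 * Real.pi),
      ‖f i θ * Complex.exp (-(Complex.I * n * θ))‖ ≤ C i := fun i θ hθ => by
    rw [Set.uIoc_of_le (by positivity)] at hθ
    simpa [Complex.norm_exp] using hfC i θ (Set.Ioc_subset_Icc_self hθ)
  simp only [fc, ← tsum_mul_right, tsum_mul_left]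
  congr 1
  refine (intervalIntegral.hasSum_integral_of_dominated_convergence (fun i _ => C i)
    (fun i => by fun_prop) (fun i => .of_forall (hbound i)) (.of_forall fun _ _ => hC)
    intervalIntegrable_const ?_).tsum_eq.symm
  exact .of_forall fun θ hθ => (Summable.of_norm_bounded hC fun i => hbound i θ hθ).hasSum

lemma fc_trigSeries_mul {c : ℤ → ℂ} (hc : Summable fun k => ‖c k‖) {g : ℝ → ℂ}
    (hg : Continuous g) (n : ℤ) : fc (fun θ => trigSeries c θ * g θ) n = convolve c (fc g) n := by
  obtain ⟨θ₀, -, hθ₀⟩ := isCompact_Icc.exists_isMaxOn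
    (Set.nonempty_Icc.mpr (by positivity : (0:ℝ) ≤ 2 * Real.pi)) hg.norm.continuousOn
  have h : ∀ θ, trigSeries c θ * g θ = ∑' k, c k * (Complex.exp (Complex.I * k * θ) * g θ) :=
    fun θ => by simp only [trigSeries, ← tsum_mul_right, mul_assoc]
  simp only [h]
  rw [fc_tsum (fun k => by fun_prop) (hc.mul_right ‖g θ₀‖) fun k θ hθ => ?_]
  · simp only [fc_const_mul, fc_exp_mul, convolve]
  · rw [norm_mul, norm_mul, norm_exp_I_mul_intCast_mul, one_mul]
    exact mul_le_mul_of_nonneg_left (hθ₀ hθ) (norm_nonneg _)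

lemma fc_trigSeries {c : ℤ → ℂ} (hc : Summable fun k => ‖c k‖) : fc (trigSeries c) = c := by
  ext n
  simpa only [mul_one, fc_const_one, convolve_delta_right] using
    fc_trigSeries_mul hc (g := fun _ => 1) continuous_const n

lemma fc_neg_of_two_pi_sub {g : ℝ → ℂ} (hg : ∀ θ, g (2 * Real.pi - θ) = g θ) (k : ℤ) :
    fc g (-k) = fc g k := by
  have h := intervalIntegral.integral_comp_sub_left
    (fun θ => g θ * Complex.exp (-(Complex.I * k * θ))) (2 * Real.pi) (a := 0) (b := 2 * Real.pi)
  rw [sub_self, sub_zero] at h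
  simp only [fc, ← h, hg]
  congr 2 with θ
  rw [show -(Complex.I * k * ((2 * Real.pi - θ : ℝ) : ℂ)) =
    Complex.I * (-k : ℤ) * ((2 * Real.pi - θ : ℝ) : ℂ) by push_cast; ring,
    exp_I_mul_intCast_mul_two_pi_sub]

lemma hasSum_toeplitzAddHankel_mul {u v : ℤ → ℂ} (hu : Summable fun n => ‖u n‖)
    (hv : Summable fun n => ‖v n‖) (hv_even : ∀ n, v (-n) = v n) (j k : ℕ) :
    HasSum (fun m : ℕ => (u (j - m) + u (j + m + 1)) * (v (m - k) + v (m + k + 1)))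
      (convolve u v (j - k) + convolve u v (j + k + 1)) := by
  have h₁ := (hasSum_convolve_sub_add hu hv j (-k)).nat_add_neg_add_one
  have h₂ := (hasSum_convolve_sub_add hu hv j (k + 1)).nat_add_neg_add_one
  refine (h₁.add h₂).congr_fun fun m => ?_
  -- the terms with negative index are folded back by the evenness of `v`
  have e₁ : v (-((m : ℤ) + 1) + -k) = v (m + k + 1) := by rw [← hv_even]; ring_nf
  have e₂ : v (-((m : ℤ) + 1) + (k + 1)) = v (m - k) := by rw [← hv_even]; ring_nf
  rw [e₁, e₂]
  ring_nf

/-- `A = T(u) + H(u)`, the Toeplitz plus Hankel operator with symbol coefficients `u`. -/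
def IsToeplitzAddHankel (A : l2 →L[ℂ] l2) (u : ℤ → ℂ) : Prop :=
  ∀ j k : ℕ, ent A j k = u (j - k) + u (j + k + 1)

def stdHilbertBasis : HilbertBasis ℕ ℂ l2 := HilbertBasis.ofRepr (LinearIsometryEquiv.refl ℂ l2)

lemma stdHilbertBasis_apply (j : ℕ) : stdHilbertBasis j = ee j :=
  (stdHilbertBasis.repr_symm_single j).symm

lemma inner_ee_left (j : ℕ) (x : l2) : ⟪ee j, x⟫_ℂ = x j := by
  simp [ee, lp.inner_single_left]

lemma ent_comp (A B : l2 →L[ℂ] l2) (j k : ℕ) :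
    ent (A ∘L B) j k = ∑' m, ent A j m * ent B m k := by
  rw [ent, ContinuousLinearMap.comp_apply, ← ContinuousLinearMap.adjoint_inner_left,
    ← stdHilbertBasis.tsum_inner_mul_inner]
  simp only [stdHilbertBasis_apply, ContinuousLinearMap.adjoint_inner_left, ent]

lemma ext_ent {A B : l2 →L[ℂ] l2} (h : ∀ j k, ent A j k = ent B j k) : A = B := by
  refine ContinuousLinearMap.ext_on (s := Set.range ee) ?_ ?_
  · rw [Submodule.dense_iff_topologicalClosure_eq_top, ← funext stdHilbertBasis_apply]
    exact stdHilbertBasis.dense_span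
  · rintro _ ⟨k, rfl⟩
    ext j
    simpa only [ent, inner_ee_left] using h j k

namespace IsToeplitzAddHankel

variable {A B : l2 →L[ℂ] l2} {u v : ℤ → ℂ}

lemma ext (hA : IsToeplitzAddHankel A u) (hB : IsToeplitzAddHankel B u) : A = B :=
  ext_ent fun j k => (hA j k).trans (hB j k).symm

lemma one : IsToeplitzAddHankel 1 fun n => if n = 0 then 1 else 0 := by
  intro j k
  rw [ent, one_apply_eq_self, inner_ee_left, ee, lp.single_apply]
  simp only [Pi.single_apply, sub_eq_zero, Nat.cast_inj, show (j : ℤ) + k + 1 ≠ 0 by omega,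
    if_false, add_zero]

lemma comp (hA : IsToeplitzAddHankel A u) (hB : IsToeplitzAddHankel B v)
    (hu : Summable fun n => ‖u n‖) (hv : Summable fun n => ‖v n‖) (hv_even : ∀ n, v (-n) = v n) :
    IsToeplitzAddHankel (A ∘L B) (convolve u v) := by
  intro j k
  rw [ent_comp, ← (hasSum_toeplitzAddHankel_mul hu hv hv_even j k).tsum_eq]
  exact tsum_congr fun m => by rw [hA, hB]

end IsToeplitzAddHankel

/-- If `a` is even, nonvanishing, with absolutely summable Fourier coefficients, and the
pointwise inverse `a⁻¹` also has absolutely summable Fourier coefficients, then for the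
operators `A = T(a) + H(a)` and `B = T(a⁻¹) + H(a⁻¹)` on ℓ²(ℕ) one has
`A ∘ B = B ∘ A = I`. -/
theorem stmt12 (c : ℤ → ℂ) (hc : Summable fun k => ‖c k‖)
    (a : ℝ → ℂ)
    (ha : ∀ θ : ℝ, a θ = ∑' k : ℤ, c k * Complex.exp (Complex.I * k * θ))
    (heven : ∀ k : ℤ, c k = c (-k))
    (hnz : ∀ θ : ℝ, a θ ≠ 0)
    (hinv : Summable fun k : ℤ => ‖fc (fun θ => (a θ)⁻¹) k‖)
    (A B : l2 →L[ℂ] l2)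
    (hA : ∀ j k : ℕ, ent A j k = fc a ((j : ℤ) - k) + fc a ((j : ℤ) + k + 1))
    (hB : ∀ j k : ℕ, ent B j k =
      fc (fun θ => (a θ)⁻¹) ((j : ℤ) - k) + fc (fun θ => (a θ)⁻¹) ((j : ℤ) + k + 1)) :
    A ∘L B = 1 ∧ B ∘L A = 1 := by
  obtain rfl : a = trigSeries c := funext ha
  set s := fc fun θ => (trigSeries c θ)⁻¹
  have hA : IsToeplitzAddHankel A c := by rwa [fc_trigSeries hc] at hA
  have hs_even : ∀ n, s (-n) = s n :=
    fc_neg_of_two_pi_sub fun θ => by rw [trigSeries_two_pi_sub heven]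
  have hcs : convolve c s = fun n => if n = 0 then 1 else 0 := by
    rw [← fc_const_one]
    ext n
    rw [← fc_trigSeries_mul hc (g := fun θ => (trigSeries c θ)⁻¹)
      ((continuous_trigSeries hc).inv₀ hnz)]
    simp only [mul_inv_cancel₀ (hnz _)]
  have hAB := hA.comp hB hc hinv hs_even
  have hBA := IsToeplitzAddHankel.comp hB hA hinv hc fun n => (heven n).symm
  rw [hcs] at hAB
  rw [convolve_comm, hcs] at hBA
  exact ⟨hAB.ext .one, hBA.ext .one⟩

end
end
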